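/- arXiv:1003.5309 — 3 statements merged into one kernel-verified Lean document; each statement's English description precedes it below -/
import Mathlib

section
/- Let (W(t))_{t≥0} be i.i.d. random n×n matrices taking finitely many values, each almost surely symmetric, doubly stochastic, and a projection (W² = W), and define x(t+1) = W(t)x(t) for a deterministic x(0) ∈ ℝⁿ. Then for all t ≥ 0, E[‖x(t) − x_ave·1‖²] ≤ λ₂(E[W(0)])ᵗ · ‖x(0) − x_ave·1‖². -/
/-!
Write `e = x - x_ave • 1`. A matrix `W` drawn with positive probability fixes `1` and, being
symmetric, also preserves coordinate sums, so one step maps the error `e` to `W e`, and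
`‖W e‖² = eᵀ W e` because `W` is a symmetric projection. Averaging, `E ‖W e‖² = eᵀ A e` with
`A = E[W]`. Both `A` and `1 - A` are positive semidefinite and `A 1 = 1`, so `1` is an eigenvector
for the top eigenvalue `1`; on its orthogonal complement, which contains `e`, the quadratic form
of `A` is at most `λ₂(A) ‖e‖²`, and `λ₂(A) ≥ 0`. Conditioning on the first step and inducting on
`t` gives the bound.
-/

open Matrix

/-- The second largest eigenvalue (counted with multiplicity) of a symmetric real
matrix: sort the `n` eigenvalues in increasing order and take the `(n-2)`-th
(junk value `0` if the matrix is not Hermitian). -/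
noncomputable def lambda2 {n : ℕ} (A : Matrix (Fin n) (Fin n) ℝ) : ℝ :=
  if h : A.IsHermitian then
    ((Finset.univ.val.map h.eigenvalues).sort (· ≤ ·)).getD (n - 2) 0
  else 0

/-- The gossip trajectory: `traj W x0 0 _ = x0` and
`traj W x0 (t+1) σ = W (σ t) *ᵥ traj W x0 t (σ restricted)`, i.e. the solution of
`x(t+1) = W(t) x(t)` driven by the i.i.d. outcomes `σ`. -/
noncomputable def traj {n : ℕ} {Ω : Type*} (W : Ω → Matrix (Fin n) (Fin n) ℝ)
    (x0 : Fin n → ℝ) : (t : ℕ) → (Fin t → Ω) → (Fin n → ℝ)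
  | 0, _ => x0
  | t + 1, σ => W (σ (Fin.last t)) *ᵥ traj W x0 t (fun k => σ k.castSucc)

open Finset

lemma List.Pairwise.countP_lt_le_of_getElem_le {α : Type*} [LinearOrder α] {l : List α}
    (hl : l.Pairwise (· ≤ ·)) {i : ℕ} (hi : i < l.length) {x : α} (hx : l[i] ≤ x) :
    l.countP (fun a => x < a) ≤ l.length - 1 - i := by
  induction l generalizing i with
  | nil => simp at hi
  | cons a l ih =>
    rw [List.pairwise_cons] at hl
    have hax : ¬ x < a := by
      cases i with
      | zero => simpa using hx
      | succ i => exact not_lt.2 ((hl.1 _ (List.getElem_mem _)).trans hx)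
    rw [List.countP_cons_of_neg (by simpa using hax)]
    cases i with
    | zero => simpa using List.countP_le_length
    | succ i =>
      have := ih hl.2 (by simpa using hi) hx
      simp only [List.length_cons]
      omega

section Lambda2

variable {n : ℕ} {A : Matrix (Fin n) (Fin n) ℝ}

lemma Matrix.PosSemidef.lambda2_nonneg (hA : A.PosSemidef) : 0 ≤ lambda2 A := by
  rw [lambda2, dif_pos hA.isHermitian]
  set l := (univ.val.map hA.isHermitian.eigenvalues).sort (· ≤ ·)
  by_cases hk : n - 2 < l.length
  · rw [List.getD_eq_getElem _ _ hk]
    obtain ⟨i, -, hi⟩ := Multiset.mem_map.1 ((Multiset.mem_sort _).1 (List.getElem_mem hk))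
    exact hi ▸ hA.eigenvalues_nonneg i
  · rw [List.getD_eq_default _ _ (not_lt.1 hk)]

lemma Matrix.IsHermitian.card_lambda2_lt_eigenvalues_le_one (hA : A.IsHermitian) :
    #{i | lambda2 A < hA.eigenvalues i} ≤ 1 := by
  set l := (univ.val.map hA.eigenvalues).sort (· ≤ ·) with hl
  have hlen : l.length = n := by simp [l]
  rcases Nat.eq_zero_or_pos n with rfl | hn
  · simp
  have hi : n - 2 < l.length := by omega
  have hlam : lambda2 A = l[n - 2] := by rw [lambda2, dif_pos hA, List.getD_eq_getElem _ _ hi]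
  calc #{i | lambda2 A < hA.eigenvalues i}
      = l.countP (fun a => lambda2 A < a) := by
        rw [hl, ← Multiset.coe_countP, Multiset.sort_eq, Multiset.countP_map]; rfl
    _ ≤ l.length - 1 - (n - 2) := (Multiset.pairwise_sort _ _).countP_lt_le_of_getElem_le hi hlam.ge
    _ ≤ 1 := by omega

end Lambda2

lemma OrthonormalBasis.dotProduct_eq_sum {ι : Type*} [Fintype ι]
    (b : OrthonormalBasis ι ℝ (EuclideanSpace ℝ ι)) (x y : ι → ℝ) :
    x ⬝ᵥ y = ∑ i, (⇑(b i) ⬝ᵥ x) * (⇑(b i) ⬝ᵥ y) := by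
  simpa [EuclideanSpace.inner_toLp_toLp, EuclideanSpace.inner_eq_star_dotProduct, dotProduct_comm]
    using (b.sum_inner_mul_inner (WithLp.toLp 2 x) (WithLp.toLp 2 y)).symm

lemma sum_mul_sq_le_of_dotProduct_eq_zero {ι : Type*} [Fintype ι] [DecidableEq ι]
    {d w z : ι → ℝ} {L μ : ℝ} (hd : #{i | L < d i} ≤ 1) (hdμ : ∀ i, d i ≤ μ)
    (hw : w ≠ 0) (hdw : ∀ i, d i * w i = μ * w i) (hzw : z ⬝ᵥ w = 0) :
    ∑ i, d i * z i ^ 2 ≤ L * ∑ i, z i ^ 2 := by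
  -- at most one coordinate has `d i > L`; the `μ`-eigenvector `w` is supported there, so `z ⊥ w`
  -- forces `z` to vanish there
  have hz : ∀ i, L < d i → z i = 0 := by
    intro i hi
    have hw_single : ∀ j, j ≠ i → w j = 0 := by
      intro j hji
      have hLj : d j ≤ L := not_lt.1 fun hj =>
        hji (card_le_one.1 hd j (by simp [hj]) i (by simp [hi]))
      by_contra hwj
      exact (hLj.trans_lt (hi.trans_le (hdμ i))).ne (mul_right_cancel₀ hwj (hdw j))
    have hwi : w i ≠ 0 := fun hwi =>
      hw (funext fun j => if hji : j = i then hji ▸ hwi else hw_single j hji)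
    have : z ⬝ᵥ w = z i * w i :=
      Fintype.sum_eq_single i fun j hji => by simp [hw_single j hji]
    exact (mul_eq_zero.1 (this ▸ hzw)).resolve_right hwi
  rw [mul_sum]
  refine sum_le_sum fun i _ => ?_
  by_cases hi : L < d i
  · simp [hz i hi]
  · exact mul_le_mul_of_nonneg_right (not_lt.1 hi) (sq_nonneg _)

namespace Matrix.IsHermitian

variable {ι : Type*} [Fintype ι] [DecidableEq ι] {A : Matrix ι ι ℝ} (hA : A.IsHermitian)

lemma eigenvectorBasis_dotProduct_mulVec (i : ι) (y : ι → ℝ) :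
    ⇑(hA.eigenvectorBasis i) ⬝ᵥ (A *ᵥ y) = hA.eigenvalues i * (⇑(hA.eigenvectorBasis i) ⬝ᵥ y) := by
  rw [dotProduct_mulVec, ← mulVec_transpose, (isHermitian_iff_isSymm.1 hA).eq,
    mulVec_eigenvectorBasis, smul_dotProduct, smul_eq_mul]

lemma dotProduct_mulVec_eq_sum (y : ι → ℝ) :
    y ⬝ᵥ (A *ᵥ y) = ∑ i, hA.eigenvalues i * (⇑(hA.eigenvectorBasis i) ⬝ᵥ y) ^ 2 := by
  simp only [hA.eigenvectorBasis.dotProduct_eq_sum y, eigenvectorBasis_dotProduct_mulVec]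
  exact sum_congr rfl fun i _ => by ring

lemma eigenvalues_le_one (h : (1 - A).PosSemidef) (i : ι) : hA.eigenvalues i ≤ 1 := by
  set u := ⇑(hA.eigenvectorBasis i)
  have hu : u ⬝ᵥ u = 1 := by
    have := orthonormal_iff_ite.1 hA.eigenvectorBasis.orthonormal i i
    rwa [if_pos rfl, EuclideanSpace.inner_eq_star_dotProduct, star_trivial] at this
  have := h.dotProduct_mulVec_nonneg u
  rw [star_trivial, sub_mulVec, one_mulVec, dotProduct_sub, hu,
    eigenvectorBasis_dotProduct_mulVec, hu] at this
  linarith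

end Matrix.IsHermitian

theorem Matrix.IsHermitian.dotProduct_mulVec_le_lambda2_mul {n : ℕ}
    {A : Matrix (Fin n) (Fin n) ℝ} (hA : A.IsHermitian) {μ : ℝ}
    (hμ : ∀ i, hA.eigenvalues i ≤ μ) {v : Fin n → ℝ} (hv : v ≠ 0) (hAv : A *ᵥ v = μ • v)
    {y : Fin n → ℝ} (hy : y ⬝ᵥ v = 0) :
    y ⬝ᵥ (A *ᵥ y) ≤ lambda2 A * (y ⬝ᵥ y) := by
  set b := hA.eigenvectorBasis
  rw [hA.dotProduct_mulVec_eq_sum, b.dotProduct_eq_sum y y]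
  simp_rw [← sq]
  refine sum_mul_sq_le_of_dotProduct_eq_zero (w := fun i => ⇑(b i) ⬝ᵥ v)
    hA.card_lambda2_lt_eigenvalues_le_one hμ ?_ ?_ ?_
  · intro hw
    refine hv (dotProduct_self_eq_zero.1 ?_)
    simpa using (b.dotProduct_eq_sum v v).trans (congrArg (fun w => w ⬝ᵥ w) hw)
  · intro i
    rw [← hA.eigenvectorBasis_dotProduct_mulVec, hAv, dotProduct_smul, smul_eq_mul]
  · rw [← hy, b.dotProduct_eq_sum y v]
    rfl

namespace Matrix.IsSymm

variable {ι : Type*} [Fintype ι] {P : Matrix ι ι ℝ}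

lemma posSemidef_of_mul_self (hs : P.IsSymm) (hP : P * P = P) : P.PosSemidef := by
  have : Pᴴ * P = P := by rw [conjTranspose_eq_transpose_of_trivial, hs.eq, hP]
  exact this ▸ posSemidef_conjTranspose_mul_self P

lemma posSemidef_one_sub_of_mul_self [DecidableEq ι] (hs : P.IsSymm) (hP : P * P = P) :
    (1 - P).PosSemidef :=
  (isSymm_one.sub hs).posSemidef_of_mul_self (by simp [sub_mul, mul_sub, hP])

lemma mulVec_dotProduct_mulVec_self (hs : P.IsSymm) (hP : P * P = P) (x : ι → ℝ) :
    (P *ᵥ x) ⬝ᵥ (P *ᵥ x) = x ⬝ᵥ (P *ᵥ x) := by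
  rw [dotProduct_mulVec, ← mulVec_transpose, hs.eq, mulVec_mulVec, hP, dotProduct_comm]

lemma sum_mulVec_eq_sum (hs : P.IsSymm) (h1 : P *ᵥ 1 = 1) (x : ι → ℝ) :
    ∑ i, (P *ᵥ x) i = ∑ i, x i := by
  rw [← one_dotProduct, ← one_dotProduct, dotProduct_mulVec, ← mulVec_transpose, hs.eq, h1]

end Matrix.IsSymm

section Mixture

variable {ι Ω : Type*} [Fintype Ω] {p : Ω → ℝ} {M : Ω → Matrix ι ι ℝ}

lemma Matrix.posSemidef_sum_smul (hp : ∀ ω, 0 ≤ p ω) (hM : ∀ ω, 0 < p ω → (M ω).PosSemidef) :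
    (∑ ω, p ω • M ω).PosSemidef :=
  posSemidef_sum _ fun ω _ => by
    rcases (hp ω).eq_or_lt with h | h
    · simpa [← h] using PosSemidef.zero
    · exact (hM ω h).smul h.le

lemma Matrix.one_sub_sum_smul [DecidableEq ι] (hsum : ∑ ω, p ω = 1) :
    1 - ∑ ω, p ω • M ω = ∑ ω, p ω • (1 - M ω) := by
  simp [smul_sub, sum_sub_distrib, ← sum_smul, hsum]

lemma Matrix.sum_smul_mulVec_eq_self [Fintype ι] (hp : ∀ ω, 0 ≤ p ω) (hsum : ∑ ω, p ω = 1)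
    {v : ι → ℝ} (hv : ∀ ω, 0 < p ω → M ω *ᵥ v = v) :
    (∑ ω, p ω • M ω) *ᵥ v = v := by
  rw [sum_mulVec]
  calc ∑ ω, (p ω • M ω) *ᵥ v = ∑ ω, p ω • v := sum_congr rfl fun ω _ => by
        rcases (hp ω).eq_or_lt with h | h
        · simp [← h]
        · rw [smul_mulVec, hv ω h]
    _ = v := by rw [← sum_smul, hsum, one_smul]

lemma Matrix.dotProduct_sum_smul_mulVec [Fintype ι] (x : ι → ℝ) :
    x ⬝ᵥ ((∑ ω, p ω • M ω) *ᵥ x) = ∑ ω, p ω * (x ⬝ᵥ (M ω *ᵥ x)) := by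
  simp [sum_mulVec, dotProduct_sum, smul_mulVec]

end Mixture

noncomputable def consensus {n : ℕ} (x : Fin n → ℝ) : Fin n → ℝ :=
  ((∑ i, x i) / n) • fun _ => (1 : ℝ)

lemma sum_sub_consensus {n : ℕ} (x : Fin n → ℝ) : ∑ i, (x - consensus x) i = 0 := by
  rcases Nat.eq_zero_or_pos n with rfl | hn
  · simp
  · have hn' : (n : ℝ) ≠ 0 := by positivity
    simp [consensus, sum_sub_distrib, mul_div_cancel₀ _ hn']

lemma mulVec_consensus {n : ℕ} {P : Matrix (Fin n) (Fin n) ℝ} (h1 : P *ᵥ 1 = 1) (x : Fin n → ℝ) :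
    P *ᵥ consensus x = consensus x := by
  rw [consensus, mulVec_smul]
  exact congrArg _ h1

theorem sum_mul_dotProduct_self_sub_consensus_le {n : ℕ} {Ω : Type*} [Fintype Ω] {p : Ω → ℝ}
    {W : Ω → Matrix (Fin n) (Fin n) ℝ} (hp : ∀ ω, 0 ≤ p ω) (hsum : ∑ ω, p ω = 1)
    (hsymm : ∀ ω, 0 < p ω → (W ω).IsSymm) (hW1 : ∀ ω, 0 < p ω → W ω *ᵥ 1 = 1)
    (hproj : ∀ ω, 0 < p ω → W ω * W ω = W ω) (x : Fin n → ℝ) :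
    ∑ ω, p ω * ((W ω *ᵥ x - consensus x) ⬝ᵥ (W ω *ᵥ x - consensus x))
      ≤ lambda2 (∑ ω, p ω • W ω) * ((x - consensus x) ⬝ᵥ (x - consensus x)) := by
  set e := x - consensus x
  have hA := posSemidef_sum_smul hp fun ω hω =>
    (hsymm ω hω).posSemidef_of_mul_self (hproj ω hω)
  have hA_le : ∀ i, hA.isHermitian.eigenvalues i ≤ 1 := hA.isHermitian.eigenvalues_le_one <| by
    rw [one_sub_sum_smul hsum]
    exact posSemidef_sum_smul hp fun ω hω =>
      (hsymm ω hω).posSemidef_one_sub_of_mul_self (hproj ω hω)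
  have hterm : ∀ ω, p ω * ((W ω *ᵥ x - consensus x) ⬝ᵥ (W ω *ᵥ x - consensus x))
      = p ω * (e ⬝ᵥ (W ω *ᵥ e)) := fun ω => by
    rcases (hp ω).eq_or_lt with h | h
    · simp [← h]
    · have hWe : W ω *ᵥ x - consensus x = W ω *ᵥ e := by
        rw [mulVec_sub, mulVec_consensus (hW1 ω h)]
      rw [hWe, (hsymm ω h).mulVec_dotProduct_mulVec_self (hproj ω h)]
  rw [sum_congr rfl fun ω _ => hterm ω, ← dotProduct_sum_smul_mulVec]
  rcases isEmpty_or_nonempty (Fin n) with hn | hn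
  · simp [dotProduct]
  refine hA.isHermitian.dotProduct_mulVec_le_lambda2_mul hA_le one_ne_zero ?_ ?_
  · rw [sum_smul_mulVec_eq_self hp hsum hW1, one_smul]
  · rw [dotProduct_one]
    exact sum_sub_consensus x

lemma traj_succ_cons {n : ℕ} {Ω : Type*} (W : Ω → Matrix (Fin n) (Fin n) ℝ) (x0 : Fin n → ℝ)
    (t : ℕ) (ω : Ω) (τ : Fin t → Ω) :
    traj W x0 (t + 1) (Fin.cons ω τ) = traj W (W ω *ᵥ x0) t τ := by
  induction t with
  | zero => rfl
  | succ t ih =>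
    rw [traj.eq_2 W x0 (t + 1), traj.eq_2 W (W ω *ᵥ x0) t, Fin.cons_last, ← ih]
    congr 2
    ext k
    cases k using Fin.cases <;> rfl

lemma Fin.sum_pi_succ_prod_mul {R Ω : Type*} [CommSemiring R] [Fintype Ω] (p : Ω → R)
    {t : ℕ} (f : (Fin (t + 1) → Ω) → R) :
    ∑ σ, (∏ k, p (σ k)) * f σ = ∑ ω, p ω * ∑ τ : Fin t → Ω, (∏ k, p (τ k)) * f (Fin.cons ω τ) := by
  rw [← (Fin.consEquiv fun _ => Ω).sum_comp, Fintype.sum_prod_type]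
  simp only [Fin.consEquiv, Equiv.coe_fn_mk, Fin.prod_univ_succ, Fin.cons_zero, Fin.cons_succ,
    mul_sum, mul_assoc]

theorem expect_sq_error_le_lambda2_pow_general {n : ℕ} {Ω : Type*} [Fintype Ω]
    (p : Ω → ℝ) (hp : ∀ ω, 0 ≤ p ω) (hsum : ∑ ω, p ω = 1)
    (W : Ω → Matrix (Fin n) (Fin n) ℝ)
    (hsymm : ∀ ω, 0 < p ω → (W ω).IsSymm)
    (hrow : ∀ ω, 0 < p ω → ∀ i, ∑ j, W ω i j = 1)
    (hproj : ∀ ω, 0 < p ω → W ω * W ω = W ω)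
    (x0 : Fin n → ℝ) (t : ℕ) :
    ∑ σ : Fin t → Ω, (∏ k, p (σ k)) *
        ((traj W x0 t σ - ((∑ i, x0 i) / n) • fun _ => (1 : ℝ)) ⬝ᵥ
          (traj W x0 t σ - ((∑ i, x0 i) / n) • fun _ => (1 : ℝ)))
      ≤ lambda2 (∑ ω, p ω • W ω) ^ t *
        ((x0 - ((∑ i, x0 i) / n) • fun _ => (1 : ℝ)) ⬝ᵥ
          (x0 - ((∑ i, x0 i) / n) • fun _ => (1 : ℝ))) := by
  set L := lambda2 (∑ ω, p ω • W ω)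
  have hL : 0 ≤ L := (posSemidef_sum_smul hp fun ω hω =>
    (hsymm ω hω).posSemidef_of_mul_self (hproj ω hω)).lambda2_nonneg
  have hW1 : ∀ ω, 0 < p ω → W ω *ᵥ 1 = 1 := fun ω hω => by
    ext i
    simpa [mulVec, dotProduct] using hrow ω hω i
  induction t generalizing x0 with
  | zero => simp [traj]
  | succ t ih =>
    have hstep (ω : Ω) : p ω * ∑ τ : Fin t → Ω, (∏ k, p (τ k)) *
          ((traj W (W ω *ᵥ x0) t τ - consensus x0) ⬝ᵥ (traj W (W ω *ᵥ x0) t τ - consensus x0))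
        ≤ p ω * (L ^ t * ((W ω *ᵥ x0 - consensus x0) ⬝ᵥ (W ω *ᵥ x0 - consensus x0))) := by
      rcases (hp ω).eq_or_lt with h | h
      · simp [← h]
      · have := ih (W ω *ᵥ x0)
        rw [(hsymm ω h).sum_mulVec_eq_sum (hW1 ω h)] at this
        exact mul_le_mul_of_nonneg_left this h.le
    rw [Fin.sum_pi_succ_prod_mul]
    simp only [traj_succ_cons]
    calc _ ≤ ∑ ω, p ω * (L ^ t * ((W ω *ᵥ x0 - consensus x0) ⬝ᵥ (W ω *ᵥ x0 - consensus x0))) :=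
          sum_le_sum fun ω _ => hstep ω
      _ = L ^ t * ∑ ω, p ω * ((W ω *ᵥ x0 - consensus x0) ⬝ᵥ (W ω *ᵥ x0 - consensus x0)) := by
          rw [mul_sum]; exact sum_congr rfl fun ω _ => by ring
      _ ≤ L ^ t * (L * ((x0 - consensus x0) ⬝ᵥ (x0 - consensus x0))) :=
          mul_le_mul_of_nonneg_left
            (sum_mul_dotProduct_self_sub_consensus_le hp hsum hsymm hW1 hproj x0) (pow_nonneg hL t)
      _ = L ^ (t + 1) * ((x0 - consensus x0) ⬝ᵥ (x0 - consensus x0)) := by ring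

/-- Let `(W(t))` be i.i.d. random `n × n` matrices taking finitely many values
(common law `p` on a finite set of outcomes `Ω`), each almost surely symmetric,
doubly stochastic, and a projection, and let `x(t+1) = W(t) x(t)` from a
deterministic `x(0)`.  Then for all `t ≥ 0`,
`E[‖x(t) − x_ave·1‖²] ≤ λ₂(E[W(0)])ᵗ · ‖x(0) − x_ave·1‖²`
(Euclidean norms written via the dot product). -/
theorem expect_sq_error_le_lambda2_pow {n : ℕ} {Ω : Type*} [Fintype Ω]
    (p : Ω → ℝ) (hp : ∀ ω, 0 ≤ p ω) (hsum : ∑ ω, p ω = 1)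
    (W : Ω → Matrix (Fin n) (Fin n) ℝ)
    (hsymm : ∀ ω, 0 < p ω → (W ω).IsSymm)
    (hnonneg : ∀ ω, 0 < p ω → ∀ i j, 0 ≤ W ω i j)
    (hrow : ∀ ω, 0 < p ω → ∀ i, ∑ j, W ω i j = 1)
    (hcol : ∀ ω, 0 < p ω → ∀ j, ∑ i, W ω i j = 1)
    (hproj : ∀ ω, 0 < p ω → W ω * W ω = W ω)
    (x0 : Fin n → ℝ) (t : ℕ) :
    ∑ σ : Fin t → Ω, (∏ k, p (σ k)) *
        ((traj W x0 t σ - ((∑ i, x0 i) / n) • fun _ => (1 : ℝ)) ⬝ᵥ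
          (traj W x0 t σ - ((∑ i, x0 i) / n) • fun _ => (1 : ℝ)))
      ≤ lambda2 (∑ ω, p ω • W ω) ^ t *
        ((x0 - ((∑ i, x0 i) / n) • fun _ => (1 : ℝ)) ⬝ᵥ
          (x0 - ((∑ i, x0 i) / n) • fun _ => (1 : ℝ))) :=
  expect_sq_error_le_lambda2_pow_general p hp hsum W hsymm hrow hproj x0 t
end

section
/- Consider uniform pairwise gossip on the complete graph on n ≥ 2 nodes: (W(t))_{t≥0} are i.i.d., each uniformly distributed over the n(n−1)/2 pairwise averaging matrices W_{ij} = I − (1/2)(e_i − e_j)(e_i − e_j)ᵀ, and x(t+1) = W(t)x(t) for a deterministic nonzero x(0) ∈ ℝⁿ. Then for every ε ∈ (0,1) and every integer t ≥ 3(n−1)·log(1/ε), one has P( ‖x(t) − x_ave·1‖ / ‖x(0)‖ ≥ ε ) ≤ ε; that is, the ε-averaging time of uniform pairwise gossip on the complete graph is O(n log(1/ε)). -/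
/-!
Write `y(t) = x(t) - x_ave • 1`. Each `W_ij` fixes constant vectors and preserves coordinate
sums, so `y(t)` is the gossip trajectory started at `y(0)` and keeps coordinate sum `0`.
One step removes `(y_i - y_j)^2 / 2` from `‖y‖^2`, and by Lagrange's identity
`∑_{i<j} (y_i - y_j)^2 = n ‖y‖^2` when `∑ y = 0`; averaging over the `n(n-1)/2` pairs gives
`E ‖y(t+1)‖^2 = (1 - 1/(n-1)) E ‖y(t)‖^2`.
Hence `E ‖y(t)‖^2 ≤ e^{-t/(n-1)} ‖x(0)‖^2 ≤ ε^3 ‖x(0)‖^2`, and Markov's inequality for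
`‖y(t)‖^2` at level `ε^2 ‖x(0)‖^2` bounds the probability by `ε`.
-/

open Matrix

/-- The pairwise averaging matrix `W_{ij} = I − (1/2)(e_i − e_j)(e_i − e_j)ᵀ`,
which replaces `x_i` and `x_j` by their average and fixes all other coordinates. -/
noncomputable def pairAvgMatrix {n : ℕ} (i j : Fin n) : Matrix (Fin n) (Fin n) ℝ :=
  1 - (2 : ℝ)⁻¹ •
    Matrix.vecMulVec (Pi.single i 1 - Pi.single j 1) (Pi.single i 1 - Pi.single j 1)

section PairAverage

variable {n : ℕ}

theorem pairAvgMatrix_mulVec (i j : Fin n) (y : Fin n → ℝ) :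
    pairAvgMatrix i j *ᵥ y = y - ((y i - y j) / 2) • (Pi.single i 1 - Pi.single j 1) := by
  rw [pairAvgMatrix, Matrix.sub_mulVec, Matrix.one_mulVec, Matrix.smul_mulVec,
    Matrix.vecMulVec_mulVec]
  ext k
  simp only [Pi.sub_apply, Pi.smul_apply, MulOpposite.smul_eq_mul_unop, MulOpposite.unop_op,
    sub_dotProduct, single_one_dotProduct, smul_eq_mul]
  ring

theorem pairAvgMatrix_mulVec_of_eq {i j : Fin n} {y : Fin n → ℝ} (h : y i = y j) :
    pairAvgMatrix i j *ᵥ y = y := by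
  simp [pairAvgMatrix_mulVec, h]

theorem sum_pairAvgMatrix_mulVec (i j : Fin n) (y : Fin n → ℝ) :
    ∑ k, (pairAvgMatrix i j *ᵥ y) k = ∑ k, y k := by
  simp [pairAvgMatrix_mulVec, Finset.sum_sub_distrib, ← Finset.mul_sum]

theorem pairAvgMatrix_mulVec_dotProduct_self {i j : Fin n} (hij : i ≠ j) (y : Fin n → ℝ) :
    (pairAvgMatrix i j *ᵥ y) ⬝ᵥ (pairAvgMatrix i j *ᵥ y) = y ⬝ᵥ y - (y i - y j) ^ 2 / 2 := by
  have hdot : (Pi.single i 1 - Pi.single j 1) ⬝ᵥ y = y i - y j := by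
    simp [sub_dotProduct]
  have hnorm :
      (Pi.single i 1 - Pi.single j 1 : Fin n → ℝ) ⬝ᵥ (Pi.single i 1 - Pi.single j 1) = 2 := by
    simp [hij, hij.symm]; norm_num
  rw [pairAvgMatrix_mulVec, sub_dotProduct, dotProduct_sub, dotProduct_sub, smul_dotProduct,
    smul_dotProduct, dotProduct_smul, dotProduct_smul, hnorm, hdot,
    dotProduct_comm y (Pi.single i 1 - Pi.single j 1), hdot]
  simp only [smul_eq_mul]
  ring

end PairAverage

section OrderedPairs

variable {ι : Type*} [Fintype ι] [LinearOrder ι]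

theorem two_nsmul_sum_pairs_lt {M : Type*} [AddCommGroup M] (f : ι → ι → M)
    (hf : ∀ i j, f i j = f j i) :
    2 • ∑ q : {q : ι × ι // q.1 < q.2}, f q.1.1 q.1.2 = ∑ i, ∑ j, f i j - ∑ i, f i i := by
  have hsplit : ∀ i j, f i j = (if i < j then f i j else 0) + (if j < i then f j i else 0)
      + (if i = j then f i j else 0) := by
    intro i j
    rcases lt_trichotomy i j with h | rfl | h
    · simp [h, h.not_gt, h.ne]
    · simp
    · simp [h, h.not_gt, h.ne', hf]
  have hlt : ∑ i, ∑ j, (if i < j then f i j else 0) =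
      ∑ q : {q : ι × ι // q.1 < q.2}, f q.1.1 q.1.2 := by
    rw [← Fintype.sum_prod_type', Finset.sum_ite, Finset.sum_const_zero, add_zero,
      Finset.sum_subtype (p := fun q : ι × ι => q.1 < q.2) _ (fun _ => by simp)]
  rw [Fintype.sum_congr _ _ fun i => Fintype.sum_congr _ _ (hsplit i)]
  simp only [Finset.sum_add_distrib, Finset.sum_ite_eq, Finset.mem_univ, if_true]
  rw [Finset.sum_comm (f := fun i j => if j < i then f j i else 0), hlt]
  abel

theorem two_mul_card_pairs_lt :
    2 * (Fintype.card {q : ι × ι // q.1 < q.2} : ℝ) = Fintype.card ι * (Fintype.card ι - 1) := by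
  have h := two_nsmul_sum_pairs_lt (ι := ι) (fun _ _ => (1 : ℝ)) fun _ _ => rfl
  simp only [Finset.sum_const, Finset.card_univ, nsmul_eq_mul, Nat.cast_ofNat, mul_one] at h
  rw [h]
  ring

theorem sum_pairs_lt_sub_sq (y : ι → ℝ) :
    ∑ q : {q : ι × ι // q.1 < q.2}, (y q.1.1 - y q.1.2) ^ 2 =
      Fintype.card ι * ∑ i, y i ^ 2 - (∑ i, y i) ^ 2 := by
  have hfull :
      ∑ i, ∑ j, (y i - y j) ^ 2 = 2 * (Fintype.card ι * ∑ i, y i ^ 2 - (∑ i, y i) ^ 2) := by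
    simp only [sub_sq, Finset.sum_add_distrib, Finset.sum_sub_distrib, Finset.sum_const,
      Finset.card_univ, nsmul_eq_mul, ← Finset.mul_sum, ← Finset.sum_mul]
    ring
  have h := two_nsmul_sum_pairs_lt (fun i j => (y i - y j) ^ 2) fun i j => by ring
  simp only [hfull, sub_self, zero_pow two_ne_zero, Finset.sum_const_zero, sub_zero,
    two_nsmul] at h
  linarith

end OrderedPairs

theorem sum_pairAvgMatrix_mulVec_dotProduct_self {n : ℕ} (hn : 2 ≤ n) {y : Fin n → ℝ}
    (hy : ∑ i, y i = 0) :
    ∑ q : {q : Fin n × Fin n // q.1 < q.2},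
        (pairAvgMatrix q.1.1 q.1.2 *ᵥ y) ⬝ᵥ (pairAvgMatrix q.1.1 q.1.2 *ᵥ y) =
      Fintype.card {q : Fin n × Fin n // q.1 < q.2} * (1 - 1 / ((n : ℝ) - 1)) * (y ⬝ᵥ y) := by
  have hcard := two_mul_card_pairs_lt (ι := Fin n)
  have hlagrange := sum_pairs_lt_sub_sq y
  simp only [Fintype.card_fin, hy, ne_eq, OfNat.ofNat_ne_zero, not_false_eq_true, zero_pow,
    sub_zero] at hcard hlagrange
  have hdot : y ⬝ᵥ y = ∑ i, y i ^ 2 := by simp [dotProduct, sq]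
  have hn1 : (n : ℝ) - 1 ≠ 0 := by
    have : (2 : ℝ) ≤ n := by exact_mod_cast hn
    linarith
  rw [Fintype.sum_congr _ _ fun q => pairAvgMatrix_mulVec_dotProduct_self (ne_of_lt q.2) y]
  simp only [Finset.sum_sub_distrib, Finset.sum_const, Finset.card_univ, nsmul_eq_mul,
    ← Finset.sum_div, hlagrange, ← hdot]
  field_simp
  linear_combination (y ⬝ᵥ y) * hcard

section Traj

variable {n : ℕ} {Ω : Type*} (W : Ω → Matrix (Fin n) (Fin n) ℝ)

theorem traj_sub (x y : Fin n → ℝ) :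
    ∀ t (σ : Fin t → Ω), traj W (x - y) t σ = traj W x t σ - traj W y t σ
  | 0, _ => rfl
  | t + 1, σ => by simp only [traj, traj_sub x y t, Matrix.mulVec_sub]

theorem traj_eq_self_of_mulVec_eq {v : Fin n → ℝ} (hv : ∀ ω, W ω *ᵥ v = v) :
    ∀ t (σ : Fin t → Ω), traj W v t σ = v
  | 0, _ => rfl
  | t + 1, _ => by rw [traj, traj_eq_self_of_mulVec_eq hv t, hv]

theorem traj_mem {S : Set (Fin n → ℝ)} (hW : ∀ ω, ∀ y ∈ S, W ω *ᵥ y ∈ S) {x : Fin n → ℝ}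
    (hx : x ∈ S) : ∀ t (σ : Fin t → Ω), traj W x t σ ∈ S
  | 0, _ => hx
  | t + 1, _ => hW _ _ (traj_mem hW hx t _)

theorem sum_traj_succ [Fintype Ω] {M : Type*} [AddCommMonoid M] (x : Fin n → ℝ)
    (F : (Fin n → ℝ) → M) (t : ℕ) :
    ∑ σ : Fin (t + 1) → Ω, F (traj W x (t + 1) σ) =
      ∑ σ : Fin t → Ω, ∑ ω, F (W ω *ᵥ traj W x t σ) := by
  rw [← (Fin.snocEquiv fun _ => Ω).sum_comp, Fintype.sum_prod_type, Finset.sum_comm]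
  simp [traj]

theorem sum_traj_eq_pow_mul [Fintype Ω] {S : Set (Fin n → ℝ)}
    (hW : ∀ ω, ∀ y ∈ S, W ω *ᵥ y ∈ S) (V : (Fin n → ℝ) → ℝ) {ρ : ℝ}
    (hV : ∀ y ∈ S, ∑ ω, V (W ω *ᵥ y) = ρ * V y) {x : Fin n → ℝ} (hx : x ∈ S) :
    ∀ t, ∑ σ : Fin t → Ω, V (traj W x t σ) = ρ ^ t * V x
  | 0 => by simp [traj]
  | t + 1 => by
    rw [sum_traj_succ, Finset.sum_congr rfl fun σ _ => hV _ (traj_mem W hW hx t σ),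
      ← Finset.mul_sum, sum_traj_eq_pow_mul hW V hV hx t, pow_succ']
    ring

end Traj

theorem dotProduct_self_nonneg {ι R : Type*} [Fintype ι] [CommRing R] [LinearOrder R]
    [IsStrictOrderedRing R] (v : ι → R) : 0 ≤ v ⬝ᵥ v :=
  Finset.sum_nonneg fun i _ => mul_self_nonneg (v i)

theorem sum_sub_mean_smul_one {n : ℕ} (hn : n ≠ 0) (x : Fin n → ℝ) :
    ∑ i, (x - ((∑ i, x i) / n) • fun _ => (1 : ℝ) : Fin n → ℝ) i = 0 := by
  simp [Finset.sum_sub_distrib, mul_div_cancel₀ _ (Nat.cast_ne_zero.mpr hn : (n : ℝ) ≠ 0)]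

theorem dotProduct_self_sub_mean_smul_one_le {n : ℕ} (x : Fin n → ℝ) :
    (x - ((∑ i, x i) / n) • fun _ => (1 : ℝ)) ⬝ᵥ (x - ((∑ i, x i) / n) • fun _ => (1 : ℝ)) ≤
      x ⬝ᵥ x := by
  rcases eq_or_ne n 0 with rfl | hn
  · simp
  have hexpand :
      (x - ((∑ i, x i) / n) • fun _ => (1 : ℝ)) ⬝ᵥ (x - ((∑ i, x i) / n) • fun _ => (1 : ℝ)) =
        x ⬝ᵥ x - (∑ i, x i) ^ 2 / n := by
    simp only [dotProduct, Pi.sub_apply, Pi.smul_apply, smul_eq_mul, mul_one, ← sq, sub_sq,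
      Finset.sum_add_distrib, Finset.sum_sub_distrib, Finset.sum_const, Finset.card_univ,
      Fintype.card_fin, nsmul_eq_mul, ← Finset.sum_mul, ← Finset.mul_sum]
    field_simp
    ring
  rw [hexpand]
  linarith [div_nonneg (sq_nonneg (∑ i, x i)) (Nat.cast_nonneg (α := ℝ) n)]

theorem sum_ite_le_sum_mul_div {ι : Type*} [Fintype ι] (P : ι → Prop) [DecidablePred P]
    {w Y : ι → ℝ} {a : ℝ} (ha : 0 < a) (hw : ∀ i, 0 ≤ w i) (hY : ∀ i, 0 ≤ Y i)
    (hPY : ∀ i, P i → a ≤ Y i) :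
    ∑ i, (if P i then w i else 0) ≤ (∑ i, w i * Y i) / a := by
  rw [le_div_iff₀ ha, Finset.sum_mul]
  refine Finset.sum_le_sum fun i _ => ?_
  split_ifs with h
  · exact mul_le_mul_of_nonneg_left (hPY i h) (hw i)
  · simpa using mul_nonneg (hw i) (hY i)

theorem sq_mul_le_of_le_sqrt_div_sqrt {ε X Y : ℝ} (hε : 0 < ε) (hX : 0 < X)
    (h : ε ≤ √Y / √X) : ε ^ 2 * X ≤ Y := by
  rwa [← Real.sqrt_div' Y hX.le, Real.le_sqrt' hε, le_div_iff₀ hX] at h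

theorem one_sub_inv_pow_le_pow {m ε : ℝ} (hm : 1 ≤ m) (hε : 0 < ε) {k t : ℕ}
    (ht : k * m * Real.log (1 / ε) ≤ t) : (1 - 1 / m) ^ t ≤ ε ^ k := by
  have hm0 : 0 < m := by linarith
  calc (1 - 1 / m) ^ t ≤ Real.exp (-(1 / m)) ^ t :=
        pow_le_pow_left₀ (by rw [sub_nonneg, div_le_one hm0]; exact hm)
          (by linarith [Real.add_one_le_exp (-(1 / m))]) t
    _ = Real.exp (-(t / m)) := by rw [← Real.exp_nat_mul]; ring_nf
    _ ≤ Real.exp (k * Real.log ε) := by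
        rw [one_div, Real.log_inv] at ht
        have : -(k * Real.log ε) ≤ t / m := by rw [le_div_iff₀ hm0]; linarith
        rw [Real.exp_le_exp]
        linarith
    _ = ε ^ k := by rw [Real.exp_nat_mul, Real.exp_log hε]

theorem averaging_time_complete_graph_general {n : ℕ} (hn : 2 ≤ n)
    (x0 : Fin n → ℝ) (hx0 : x0 ≠ 0)
    (ε : ℝ) (hε0 : 0 < ε)
    (t : ℕ) (ht : 3 * ((n : ℝ) - 1) * Real.log (1 / ε) ≤ t) :
    ∑ σ : Fin t → {q : Fin n × Fin n // q.1 < q.2},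
      (if ε ≤
          Real.sqrt
            ((traj (fun q : {q : Fin n × Fin n // q.1 < q.2} =>
                  pairAvgMatrix q.1.1 q.1.2) x0 t σ
                - ((∑ i, x0 i) / n) • fun _ => (1 : ℝ)) ⬝ᵥ
              (traj (fun q : {q : Fin n × Fin n // q.1 < q.2} =>
                  pairAvgMatrix q.1.1 q.1.2) x0 t σ
                - ((∑ i, x0 i) / n) • fun _ => (1 : ℝ))) /
            Real.sqrt (x0 ⬝ᵥ x0)
        then ∏ _k : Fin t, ((Fintype.card {q : Fin n × Fin n // q.1 < q.2} : ℝ))⁻¹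
        else 0) ≤ ε := by
  set W := fun q : {q : Fin n × Fin n // q.1 < q.2} => pairAvgMatrix q.1.1 q.1.2
  set C : ℝ := (Fintype.card {q : Fin n × Fin n // q.1 < q.2} : ℝ)
  set c := (∑ i, x0 i) / n
  set y0 := x0 - c • fun _ => (1 : ℝ)
  have hn2 : (2 : ℝ) ≤ n := by exact_mod_cast hn
  have hC : C ≠ 0 := by
    have h := two_mul_card_pairs_lt (ι := Fin n)
    simp only [Fintype.card_fin] at h
    nlinarith
  have hX : 0 < x0 ⬝ᵥ x0 :=
    (dotProduct_self_nonneg x0).lt_of_ne' (mt dotProduct_self_eq_zero.mp hx0)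
  have hdev : ∀ σ, traj W x0 t σ - c • (fun _ => (1 : ℝ)) = traj W y0 t σ := fun σ => by
    rw [traj_sub, traj_eq_self_of_mulVec_eq W (v := c • fun _ => 1)
      (fun _ => pairAvgMatrix_mulVec_of_eq rfl)]
  have hmean : ∑ σ, traj W y0 t σ ⬝ᵥ traj W y0 t σ =
      (C * (1 - 1 / ((n : ℝ) - 1))) ^ t * (y0 ⬝ᵥ y0) :=
    sum_traj_eq_pow_mul W (S := {y | ∑ i, y i = 0})
      (fun _ y hy => (sum_pairAvgMatrix_mulVec _ _ y).trans hy) (fun y => y ⬝ᵥ y)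
      (fun _ hy => sum_pairAvgMatrix_mulVec_dotProduct_self hn hy)
      (sum_sub_mean_smul_one (by omega) x0) t
  have hdecay : (1 - 1 / ((n : ℝ) - 1)) ^ t ≤ ε ^ 3 :=
    one_sub_inv_pow_le_pow (by linarith) hε0 (by exact_mod_cast ht)
  rw [Fin.prod_const]
  calc _ ≤ (∑ σ, C⁻¹ ^ t * (traj W y0 t σ ⬝ᵥ traj W y0 t σ)) / (ε ^ 2 * (x0 ⬝ᵥ x0)) :=
        sum_ite_le_sum_mul_div _ (by positivity) (fun _ => by positivity)
          (fun _ => dotProduct_self_nonneg _)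
          fun σ h => sq_mul_le_of_le_sqrt_div_sqrt hε0 hX (by rwa [hdev] at h)
    _ = (1 - 1 / ((n : ℝ) - 1)) ^ t * (y0 ⬝ᵥ y0) / (ε ^ 2 * (x0 ⬝ᵥ x0)) := by
        rw [← Finset.mul_sum, hmean, mul_pow, ← mul_assoc, ← mul_assoc, ← mul_pow,
          inv_mul_cancel₀ hC, one_pow, one_mul]
    _ ≤ ε ^ 3 * (x0 ⬝ᵥ x0) / (ε ^ 2 * (x0 ⬝ᵥ x0)) := by
        gcongr
        · exact dotProduct_self_nonneg y0
        · exact dotProduct_self_sub_mean_smul_one_le x0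
    _ = ε := by field_simp

/-- Uniform pairwise gossip on the complete graph on `n ≥ 2` nodes: the `W(t)` are
i.i.d., uniform over the `n(n−1)/2` pairwise averaging matrices `W_{ij}` (`i < j`,
each outcome having probability `1/card`), and `x(t+1) = W(t) x(t)` from a nonzero
deterministic `x(0)`.  Then for every `ε ∈ (0,1)` and every `t ≥ 3(n−1) log(1/ε)`,
`P(‖x(t) − x_ave·1‖ / ‖x(0)‖ ≥ ε) ≤ ε`; i.e. the ε-averaging time is
`O(n log(1/ε))`. -/
theorem averaging_time_complete_graph {n : ℕ} (hn : 2 ≤ n)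
    (x0 : Fin n → ℝ) (hx0 : x0 ≠ 0)
    (ε : ℝ) (hε0 : 0 < ε) (hε1 : ε < 1)
    (t : ℕ) (ht : 3 * ((n : ℝ) - 1) * Real.log (1 / ε) ≤ t) :
    ∑ σ : Fin t → {q : Fin n × Fin n // q.1 < q.2},
      (if ε ≤
          Real.sqrt
            ((traj (fun q : {q : Fin n × Fin n // q.1 < q.2} =>
                  pairAvgMatrix q.1.1 q.1.2) x0 t σ
                - ((∑ i, x0 i) / n) • fun _ => (1 : ℝ)) ⬝ᵥ
              (traj (fun q : {q : Fin n × Fin n // q.1 < q.2} =>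
                  pairAvgMatrix q.1.1 q.1.2) x0 t σ
                - ((∑ i, x0 i) / n) • fun _ => (1 : ℝ))) /
            Real.sqrt (x0 ⬝ᵥ x0)
        then ∏ _k : Fin t, ((Fintype.card {q : Fin n × Fin n // q.1 < q.2} : ℝ))⁻¹
        else 0) ≤ ε :=
  averaging_time_complete_graph_general hn x0 hx0 ε hε0 t ht
end

section
/- Let D ⊂ ℝ² be a bounded measurable set of positive Lebesgue measure, let θ ∈ ℝ² and r > 0 be such that the closed ball B(θ, r) is contained in D, and let Y_1, Y_2, … be i.i.d. random points uniformly distributed on D. Then, almost surely, the centroid of the points falling in B(θ, r) converges to θ: (∑_{i=1}^n Y_i · 1_{{‖Y_i − θ‖ ≤ r}}) / (∑_{i=1}^n 1_{{‖Y_i − θ‖ ≤ r}}) → θ as n → ∞ (the denominator being almost surely positive for all sufficiently large n). In particular, the thresholded RSS source-localization estimator θ̂₁ is a consistent estimator of the source location as the number of uniformly deployed sensors grows. -/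
/-!
By Etemadi's strong law of large numbers, almost surely `n⁻¹ · #{i < n : Yᵢ ∈ B}` tends to
`p = ν(B) > 0` and `n⁻¹ ∑_{i<n} 1_B(Yᵢ) Yᵢ` tends to `∫_B y dν`, where `ν` is the uniform law on `D`
and `B = B(θ, r) ⊆ D`. The reflection `y ↦ 2θ - y` preserves Lebesgue measure and maps `B` onto
itself, so `∫_B y dν = p • θ`. Hence the count is eventually positive and the centroid, the ratio
of the two averages, tends to `p⁻¹ • p • θ = θ`.
-/

open MeasureTheory Filter ProbabilityTheory Finset Topology Function

theorem strong_law_ae_comp_of_map_eq {Ω E F : Type*} [MeasurableSpace Ω] {μ : Measure Ω}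
    [MeasurableSpace E] [NormedAddCommGroup F] [NormedSpace ℝ F] [CompleteSpace F]
    [MeasurableSpace F] [BorelSpace F] [SecondCountableTopology F]
    {X : ℕ → Ω → E} (hX : ∀ i, Measurable (X i)) (hindep : Pairwise ((· ⟂ᵢ[μ] ·) on X))
    {ν : Measure E} (hXν : ∀ i, μ.map (X i) = ν) {g : E → F} (hg : Measurable g)
    (hgν : Integrable g ν) :
    ∀ᵐ ω ∂μ, Tendsto (fun n : ℕ => (n : ℝ)⁻¹ • ∑ i ∈ range n, g (X i ω)) atTop
      (𝓝 (∫ x, g x ∂ν)) := by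
  have hident : ∀ i, IdentDistrib (X i) (X 0) μ μ := fun i =>
    ⟨(hX i).aemeasurable, (hX 0).aemeasurable, (hXν i).trans (hXν 0).symm⟩
  have hint : Integrable (g ∘ X 0) μ := by
    rw [← integrable_map_measure hg.aestronglyMeasurable (hX 0).aemeasurable, hXν 0]
    exact hgν
  have hlaw := strong_law_ae (fun i => g ∘ X i) hint
    (fun i j hij => (hindep hij).comp hg hg) (fun i => (hident i).comp hg)
  rwa [← hXν 0, integral_map (hX 0).aemeasurable hg.aestronglyMeasurable]

theorem tendsto_inv_smul_of_tendsto_smul {α E : Type*} [NormedAddCommGroup E] [NormedSpace ℝ E]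
    {l : Filter α} {c S : α → ℝ} {T : α → E} {p : ℝ} {q : E} (hc : ∀ᶠ x in l, 0 < c x)
    (hp : 0 < p) (hS : Tendsto (fun x => c x * S x) l (𝓝 p))
    (hT : Tendsto (fun x => c x • T x) l (𝓝 q)) :
    (∀ᶠ x in l, 0 < S x) ∧ Tendsto (fun x => (S x)⁻¹ • T x) l (𝓝 (p⁻¹ • q)) := by
  have hcS : ∀ᶠ x in l, 0 < c x * S x := hS.eventually (eventually_gt_nhds hp)
  refine ⟨(hc.and hcS).mono fun x hx => pos_of_mul_pos_right hx.2 hx.1.le, ?_⟩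
  refine ((hS.inv₀ hp.ne').smul hT).congr' (hc.mono fun x hx => ?_)
  rw [smul_smul, mul_inv_rev, mul_assoc, inv_mul_cancel₀ hx.ne', mul_one]

section Centroid

variable {G : Type*} [NormedAddCommGroup G] [NormedSpace ℝ G] [MeasurableSpace G] [BorelSpace G]

theorem setIntegral_id_of_sub_mem_iff [CompleteSpace G] (μ : Measure G) [μ.IsAddLeftInvariant]
    [μ.IsNegInvariant] {s : Set G} {θ : G} (hs : MeasurableSet s)
    (hsym : ∀ x, θ + θ - x ∈ s ↔ x ∈ s) (hμs : μ s ≠ ⊤) (hint : IntegrableOn (fun x => x) s μ) :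
    ∫ x in s, x ∂μ = μ.real s • θ := by
  have hreflect : ∫ x in s, x ∂μ = ∫ x in s, (θ + θ - x) ∂μ := by
    rw [← integral_indicator hs, ← integral_indicator hs,
      ← integral_sub_left_eq_self _ μ (θ + θ)]
    congr 1
    funext x
    by_cases hx : x ∈ s
    · rw [Set.indicator_of_mem ((hsym x).2 hx), Set.indicator_of_mem hx]
    · rw [Set.indicator_of_notMem (mt (hsym x).1 hx), Set.indicator_of_notMem hx]
  rw [integral_sub (integrableOn_const (C := θ + θ) hμs) hint, setIntegral_const] at hreflect
  linear_combination (norm := module) (1 / 2 : ℝ) • hreflect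

variable [FiniteDimensional ℝ G] (μ : Measure G) [μ.IsAddHaarMeasure]

theorem setIntegral_id_closedBall (θ : G) (r : ℝ) :
    ∫ x in Metric.closedBall θ r, x ∂μ = μ.real (Metric.closedBall θ r) • θ := by
  refine setIntegral_id_of_sub_mem_iff μ measurableSet_closedBall (fun x => ?_)
    measure_closedBall_lt_top.ne
    (continuous_id'.continuousOn.integrableOn_compact (isCompact_closedBall θ r))
  rw [Metric.mem_closedBall, Metric.mem_closedBall, dist_eq_norm, dist_eq_norm, ← norm_neg]
  congr! 2
  abel

theorem setIntegral_id_closedBall_smul_restrict (c : ENNReal) {D : Set G} {θ : G} {r : ℝ}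
    (hball : Metric.closedBall θ r ⊆ D) :
    ∫ x in Metric.closedBall θ r, x ∂(c • μ.restrict D) =
      (c • μ.restrict D).real (Metric.closedBall θ r) • θ := by
  rw [Measure.restrict_smul, Measure.restrict_restrict_of_subset hball, integral_smul_measure,
    setIntegral_id_closedBall, measureReal_ennreal_smul_apply, smul_smul,
    measureReal_def, measureReal_def, Measure.restrict_eq_self _ hball]

theorem measureReal_closedBall_pos_of_uniform {D : Set G} (hD : μ D ≠ ⊤) {θ : G} {r : ℝ}
    (hr : 0 < r) (hball : Metric.closedBall θ r ⊆ D) :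
    0 < ((μ D)⁻¹ • μ.restrict D).real (Metric.closedBall θ r) := by
  have hball_pos : 0 < μ (Metric.closedBall θ r) := Metric.measure_closedBall_pos μ θ hr
  rw [measureReal_ennreal_smul_apply, measureReal_restrict_apply measurableSet_closedBall,
    Set.inter_eq_left.2 hball]
  refine mul_pos (ENNReal.toReal_pos (ENNReal.inv_ne_zero.2 hD) ?_) ?_
  · exact ENNReal.inv_ne_top.2 (hball_pos.trans_le (measure_mono hball)).ne'
  · exact ENNReal.toReal_pos hball_pos.ne' measure_closedBall_lt_top.ne

end Centroid

theorem centroid_of_uniform_points_in_ball_tendsto_center_general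
    {Ω : Type*} [MeasurableSpace Ω] (μ : Measure Ω) [IsProbabilityMeasure μ]
    (D : Set (EuclideanSpace ℝ (Fin 2)))
    (hDbdd : Bornology.IsBounded D)
    (θ : EuclideanSpace ℝ (Fin 2)) (r : ℝ) (hr : 0 < r)
    (hball : Metric.closedBall θ r ⊆ D)
    (Y : ℕ → Ω → EuclideanSpace ℝ (Fin 2)) (hYmeas : ∀ i, Measurable (Y i))
    (hYindep : ProbabilityTheory.iIndepFun Y μ)
    (hYunif : ∀ i, Measure.map (Y i) μ = (volume D)⁻¹ • volume.restrict D) :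
    ∀ᵐ ω ∂μ,
      (∃ N : ℕ, ∀ n ≥ N,
        (0 : ℝ) < ∑ i ∈ Finset.range n, (if dist (Y i ω) θ ≤ r then (1 : ℝ) else 0)) ∧
      Tendsto
        (fun n : ℕ =>
          (∑ i ∈ Finset.range n, (if dist (Y i ω) θ ≤ r then (1 : ℝ) else 0))⁻¹ •
            ∑ i ∈ Finset.range n,
              (if dist (Y i ω) θ ≤ r then (1 : ℝ) else 0) • Y i ω)
        atTop (nhds θ) := by
  classical
  set B := Metric.closedBall θ r
  have hB : MeasurableSet B := measurableSet_closedBall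
  have hcount : (fun y => if dist y θ ≤ r then (1 : ℝ) else 0) = B.indicator 1 := by
    funext y
    simp [B, Set.indicator_apply]
  have hsum : (fun y => (if dist y θ ≤ r then (1 : ℝ) else 0) • y) = B.indicator fun y => y := by
    funext y
    simp [B, Set.indicator_apply]
  have : IsProbabilityMeasure ((volume D)⁻¹ • volume.restrict D) :=
    hYunif 0 ▸ Measure.isProbabilityMeasure_map (hYmeas 0).aemeasurable
  have hp := measureReal_closedBall_pos_of_uniform volume hDbdd.measure_lt_top.ne hr hball
  have hindep : Pairwise ((· ⟂ᵢ[μ] ·) on Y) := fun i j hij => hYindep.indepFun hij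
  filter_upwards [strong_law_ae_comp_of_map_eq hYmeas hindep hYunif
      (hcount ▸ measurable_const.indicator hB) (hcount ▸ (integrable_const 1).indicator hB),
    strong_law_ae_comp_of_map_eq hYmeas hindep hYunif (hsum ▸ measurable_id'.indicator hB)
      (hsum ▸ (continuous_id'.continuousOn.integrableOn_compact
        (isCompact_closedBall θ r)).integrable_indicator hB)] with ω hcountω hsumω
  rw [hcount, integral_indicator_one hB] at hcountω
  rw [hsum, integral_indicator hB, setIntegral_id_closedBall_smul_restrict _ _ hball] at hsumω
  obtain ⟨hpos, hlim⟩ := tendsto_inv_smul_of_tendsto_smul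
    ((eventually_gt_atTop 0).mono fun n hn => inv_pos.2 (Nat.cast_pos.2 hn)) hp hcountω hsumω
  rw [inv_smul_smul₀ hp.ne'] at hlim
  exact ⟨eventually_atTop.1 hpos, hlim⟩

/-- Consistency of the thresholded RSS localization estimator.  Let `D ⊂ ℝ²` be a
bounded measurable set of positive measure containing the closed ball `B(θ, r)`,
and let `Y₁, Y₂, …` be i.i.d. uniform random points on `D`.  Then almost surely,
for all large `n` some point falls in `B(θ, r)`, and the centroid
`(∑_{i<n} Y_i 1_{‖Y_i − θ‖ ≤ r}) / (∑_{i<n} 1_{‖Y_i − θ‖ ≤ r})` converges to `θ`. -/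
theorem centroid_of_uniform_points_in_ball_tendsto_center
    {Ω : Type*} [MeasurableSpace Ω] (μ : Measure Ω) [IsProbabilityMeasure μ]
    (D : Set (EuclideanSpace ℝ (Fin 2))) (hDmeas : MeasurableSet D)
    (hDbdd : Bornology.IsBounded D) (hDpos : 0 < volume D)
    (θ : EuclideanSpace ℝ (Fin 2)) (r : ℝ) (hr : 0 < r)
    (hball : Metric.closedBall θ r ⊆ D)
    (Y : ℕ → Ω → EuclideanSpace ℝ (Fin 2)) (hYmeas : ∀ i, Measurable (Y i))
    (hYindep : ProbabilityTheory.iIndepFun Y μ)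
    (hYunif : ∀ i, Measure.map (Y i) μ = (volume D)⁻¹ • volume.restrict D) :
    ∀ᵐ ω ∂μ,
      (∃ N : ℕ, ∀ n ≥ N,
        (0 : ℝ) < ∑ i ∈ Finset.range n, (if dist (Y i ω) θ ≤ r then (1 : ℝ) else 0)) ∧
      Tendsto
        (fun n : ℕ =>
          (∑ i ∈ Finset.range n, (if dist (Y i ω) θ ≤ r then (1 : ℝ) else 0))⁻¹ •
            ∑ i ∈ Finset.range n,
              (if dist (Y i ω) θ ≤ r then (1 : ℝ) else 0) • Y i ω)
        atTop (nhds θ) :=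
  centroid_of_uniform_points_in_ball_tendsto_center_general μ D hDbdd θ r hr hball Y hYmeas hYindep
    hYunif
end
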